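/- Let S₀, S₁, … be a saturation with respect to the PaRC calculus. If a ground clause C is redundant with respect to S_i*, then for every j ≥ i, C is redundant with respect to S_j* and also redundant with respect to ⌊S_j⌋. -/

import Mathlib

set_option autoImplicit false

namespace PaRC

/-- First-order terms over a signature `F` with arity function `ar`;
variables are natural numbers. -/
inductive Trm (F : Type) (ar : F → ℕ) : Type
  | var : ℕ → Trm F ar
  | app : (f : F) → (Fin (ar f) → Trm F ar) → Trm F ar

variable {F : Type} {ar : F → ℕ}

/-- Substitutions. -/
abbrev Subst (F : Type) (ar : F → ℕ) : Type := ℕ → Trm F ar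

/-- Applying a substitution to a term. -/
def Trm.subst (σ : Subst F ar) : Trm F ar → Trm F ar
  | .var x => σ x
  | .app f a => .app f (fun i => (a i).subst σ)

/-- Composition of substitutions. -/
def Subst.comp (σ τ : Subst F ar) : Subst F ar := fun x => Trm.subst τ (σ x)

/-- A term is ground if it contains no variables. -/
def Trm.IsGround : Trm F ar → Prop
  | .var _ => False
  | .app _ a => ∀ i, (a i).IsGround

/-- Free variables of a term. -/
def Trm.fvars : Trm F ar → Set ℕ
  | .var x => {x}
  | .app _ a => ⋃ i, (a i).fvars

/-- Subterm at a position (list of argument indices). -/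
def Trm.atPos : Trm F ar → List ℕ → Option (Trm F ar)
  | t, [] => some t
  | .var _, _ :: _ => none
  | .app f a, i :: p => if h : i < ar f then Trm.atPos (a ⟨i, h⟩) p else none

/-- Replace the subterm at a given position. -/
def Trm.replace : Trm F ar → List ℕ → Trm F ar → Trm F ar
  | _, [], u => u
  | .var x, _ :: _, _ => .var x
  | .app f a, i :: p, u =>
      if h : i < ar f then
        .app f (Function.update a ⟨i, h⟩ (Trm.replace (a ⟨i, h⟩) p u))
      else .app f a

/-- An equality literal: polarity together with the two sides. -/
structure Lit (F : Type) (ar : F → ℕ) : Type where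
  pos : Bool
  lhs : Trm F ar
  rhs : Trm F ar

def Lit.subst (σ : Subst F ar) (L : Lit F ar) : Lit F ar :=
  ⟨L.pos, Trm.subst σ L.lhs, Trm.subst σ L.rhs⟩

def Lit.IsGround (L : Lit F ar) : Prop := L.lhs.IsGround ∧ L.rhs.IsGround

def Lit.fvars (L : Lit F ar) : Set ℕ := L.lhs.fvars ∪ L.rhs.fvars

/-- A clause is a (finite) multiset of literals. -/
abbrev Clause (F : Type) (ar : F → ℕ) : Type := Multiset (Lit F ar)

def Clause.subst (σ : Subst F ar) (C : Clause F ar) : Clause F ar := C.map (Lit.subst σ)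

def Clause.IsGround (C : Clause F ar) : Prop := ∀ L ∈ C, L.IsGround

def Clause.fvars (C : Clause F ar) : Set ℕ := {x | ∃ L ∈ C, x ∈ L.fvars}

/-- A substitution is grounding for a clause if the instance is ground. -/
def GroundingFor (θ : Subst F ar) (C : Clause F ar) : Prop :=
  Clause.IsGround (Clause.subst θ C)

/-- A term occurs in a clause if it is a subterm of a side of one of its literals. -/
def OccursIn (u : Trm F ar) (C : Clause F ar) : Prop :=
  ∃ L ∈ C, ∃ p, Trm.atPos L.lhs p = some u ∨ Trm.atPos L.rhs p = some u

/-! ### Semantics: Σ-algebras, entailment and satisfiability -/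

/-- A Σ-algebra (first-order structure for the purely equational signature). -/
structure Alg (F : Type) (ar : F → ℕ) : Type 1 where
  carrier : Type
  nonempty : Nonempty carrier
  interp : (f : F) → (Fin (ar f) → carrier) → carrier

def Trm.eval (A : Alg F ar) (v : ℕ → A.carrier) : Trm F ar → A.carrier
  | .var x => v x
  | .app f a => A.interp f (fun i => (a i).eval A v)

def Lit.holds (A : Alg F ar) (v : ℕ → A.carrier) (L : Lit F ar) : Prop :=
  if L.pos then L.lhs.eval A v = L.rhs.eval A v else L.lhs.eval A v ≠ L.rhs.eval A v

/-- A clause is true in an algebra if it is true under every valuation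
(variables are implicitly universally quantified). -/
def Clause.validIn (A : Alg F ar) (C : Clause F ar) : Prop :=
  ∀ v : ℕ → A.carrier, ∃ L ∈ C, Lit.holds A v L

/-- First-order entailment between a set of clauses and a clause. -/
def Entails (S : Set (Clause F ar)) (D : Clause F ar) : Prop :=
  ∀ A : Alg F ar, (∀ C ∈ S, Clause.validIn A C) → Clause.validIn A D

/-- Satisfiability of a set of clauses. -/
def Satisfiable (S : Set (Clause F ar)) : Prop :=
  ∃ A : Alg F ar, ∀ C ∈ S, Clause.validIn A C

/-! ### Simplification orders and their bag extensions -/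

/-- A simplification order: a reduction ordering that is total on ground terms
and has the subterm property. -/
structure SimpOrd (F : Type) (ar : F → ℕ) : Type where
  gt : Trm F ar → Trm F ar → Prop
  trans : ∀ {s t u : Trm F ar}, gt s t → gt t u → gt s u
  irrefl : ∀ s : Trm F ar, ¬ gt s s
  wf : WellFounded (fun s t : Trm F ar => gt t s)
  substStable : ∀ (σ : Subst F ar) {s t : Trm F ar}, gt s t →
    gt (Trm.subst σ s) (Trm.subst σ t)
  ctxStable : ∀ (s : Trm F ar) (p : List ℕ) {l r : Trm F ar}, (Trm.atPos s p).isSome →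
    gt l r → gt (Trm.replace s p l) (Trm.replace s p r)
  subterm : ∀ {s t : Trm F ar} (p : List ℕ), Trm.atPos s p = some t → s ≠ t → gt s t
  totalGround : ∀ {s t : Trm F ar}, s.IsGround → t.IsGround → s ≠ t → gt s t ∨ gt t s

/-- Bag (Dershowitz–Manna multiset) extension of an ordering: `N > M`. -/
def MultGT {α : Type} (r : α → α → Prop) (N M : Multiset α) : Prop :=
  ∃ X Y Z : Multiset α, X ≠ 0 ∧ N = Z + X ∧ M = Z + Y ∧ ∀ y ∈ Y, ∃ x ∈ X, r x y

/-- The multiset of terms associated to a literal: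
`{s, t}` for `s ≈ t` and `{s, s, t, t}` for `s ≉ t`. -/
def Lit.ms (L : Lit F ar) : Multiset (Trm F ar) :=
  if L.pos then {L.lhs, L.rhs} else {L.lhs, L.lhs, L.rhs, L.rhs}

/-- The induced ordering on literals. -/
def litGT (O : SimpOrd F ar) (L M : Lit F ar) : Prop := MultGT O.gt L.ms M.ms

/-- The induced ordering on clauses. -/
def clauseGT (O : SimpOrd F ar) (C D : Clause F ar) : Prop := MultGT (litGT O) C D

def clauseGE (O : SimpOrd F ar) (C D : Clause F ar) : Prop := clauseGT O C D ∨ C = D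

/-- A ground clause `D` is redundant w.r.t. a set `S` of ground clauses if it is
entailed by finitely many clauses of `S` that are all smaller than `D`. -/
def Redundant (O : SimpOrd F ar) (S : Set (Clause F ar)) (D : Clause F ar) : Prop :=
  ∃ Cs : List (Clause F ar), (∀ C ∈ Cs, C ∈ S) ∧
    Entails {C | C ∈ Cs} D ∧ ∀ C ∈ Cs, clauseGT O D C

/-! ### Redundancy formulas and partial clauses -/

/-- Redundancy formulas: first-order formulas over the term algebra extended with
the interpreted predicates `≻` (the simplification order) and equality. -/
inductive RForm (F : Type) (ar : F → ℕ) : Type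
  | falsum : RForm F ar
  | verum : RForm F ar
  | eq (s t : Trm F ar) : RForm F ar
  | gt (s t : Trm F ar) : RForm F ar
  | and (a b : RForm F ar) : RForm F ar
  | or (a b : RForm F ar) : RForm F ar
  | ex (x : ℕ) (a : RForm F ar) : RForm F ar

def RForm.subst (σ : Subst F ar) : RForm F ar → RForm F ar
  | .falsum => .falsum
  | .verum => .verum
  | .eq s t => .eq (Trm.subst σ s) (Trm.subst σ t)
  | .gt s t => .gt (Trm.subst σ s) (Trm.subst σ t)
  | .and a b => .and (a.subst σ) (b.subst σ)
  | .or a b => .or (a.subst σ) (b.subst σ)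
  | .ex x a => .ex x (a.subst fun y => if y = x then Trm.var x else σ y)

def RForm.fvars : RForm F ar → Set ℕ
  | .falsum => ∅
  | .verum => ∅
  | .eq s t => s.fvars ∪ t.fvars
  | .gt s t => s.fvars ∪ t.fvars
  | .and a b => a.fvars ∪ b.fvars
  | .or a b => a.fvars ∪ b.fvars
  | .ex x a => a.fvars \ {x}

/-- Truth of a redundancy formula in the extended term algebra `T_R(Σ)`,
under a valuation `v` mapping variables to (ground) terms. -/
def RForm.realize (O : SimpOrd F ar) (v : Subst F ar) : RForm F ar → Prop
  | .falsum => False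
  | .verum => True
  | .eq s t => Trm.subst v s = Trm.subst v t
  | .gt s t => O.gt (Trm.subst v s) (Trm.subst v t)
  | .and a b => a.realize O v ∧ b.realize O v
  | .or a b => a.realize O v ∨ b.realize O v
  | .ex x a => ∃ g : Trm F ar, g.IsGround ∧ a.realize O (Function.update v x g)

/-- `σ ⊨ R`: every ground instance of `Rσ` is true in `T_R(Σ)`. -/
def RSat (O : SimpOrd F ar) (σ : Subst F ar) (R : RForm F ar) : Prop :=
  ∀ v : Subst F ar, (∀ x, (v x).IsGround) → RForm.realize O v (RForm.subst σ R)

theorem RForm.falsum_fvars_sub (s : Set ℕ) : RForm.fvars (.falsum : RForm F ar) ⊆ s := by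
  intro x hx; simp [RForm.fvars] at hx

/-- `s ⪰ t` as a redundancy formula. -/
def RForm.ge (s t : Trm F ar) : RForm F ar := .or (.gt s t) (.eq s t)

/-- `(s ≐ t) ⪰ l` as a redundancy formula. -/
def Lit.geForm (L : Lit F ar) (l : Trm F ar) : RForm F ar :=
  .or (RForm.ge L.lhs l) (RForm.ge L.rhs l)

/-- `(s ≐ t) ≻ l` as a redundancy formula. -/
def Lit.gtForm (L : Lit F ar) (l : Trm F ar) : RForm F ar :=
  .or (.gt L.lhs l) (.gt L.rhs l)

/-- `C ⪰ l` as a redundancy formula (disjunction over the literals of `C`). -/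
noncomputable def Clause.geForm (C : Clause F ar) (l : Trm F ar) : RForm F ar :=
  C.toList.foldr (fun L acc => RForm.or (Lit.geForm L l) acc) RForm.falsum

/-- `C ≻ l` as a redundancy formula (disjunction over the literals of `C`). -/
noncomputable def Clause.gtForm (C : Clause F ar) (l : Trm F ar) : RForm F ar :=
  C.toList.foldr (fun L acc => RForm.or (Lit.gtForm L l) acc) RForm.falsum

/-- A partial clause `C ⋈ R`: a clause together with a redundancy formula all of
whose free variables occur in the clause. -/
structure PClause (F : Type) (ar : F → ℕ) : Type where
  cl : Clause F ar
  rf : RForm F ar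
  hfv : RForm.fvars rf ⊆ Clause.fvars cl

/-- `⌊C ⋈ R⌋`: the ground instances `Cθ` with `θ ⊭ R`. -/
def pgnd (O : SimpOrd F ar) (pc : PClause F ar) : Set (Clause F ar) :=
  {D | ∃ θ : Subst F ar, D = Clause.subst θ pc.cl ∧ Clause.IsGround D ∧ ¬ RSat O θ pc.rf}

/-- `⌊S⌋` for a set of partial clauses. -/
def gndS (O : SimpOrd F ar) (S : Set (PClause F ar)) : Set (Clause F ar) :=
  ⋃ pc ∈ S, pgnd O pc

/-- `S*`: all ground instances of clauses occurring in `S`. -/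
def gstar (S : Set (PClause F ar)) : Set (Clause F ar) :=
  {D | ∃ pc ∈ S, ∃ θ : Subst F ar, D = Clause.subst θ pc.cl ∧ Clause.IsGround D}

/-! ### The PaRC calculus -/

def IsUnifier (σ : Subst F ar) (s t : Trm F ar) : Prop := Trm.subst σ s = Trm.subst σ t

def IsMGU (σ : Subst F ar) (s t : Trm F ar) : Prop :=
  IsUnifier σ s t ∧ ∀ η : Subst F ar, IsUnifier η s t → ∃ μ : Subst F ar, η = Subst.comp σ μ

/-- A literal selection function satisfying the standard condition w.r.t. `≻`. -/
structure SelFun (F : Type) (ar : F → ℕ) (O : SimpOrd F ar) : Type where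
  sel : Clause F ar → Set (Lit F ar)
  subset : ∀ C : Clause F ar, sel C ⊆ {L | L ∈ C}
  nonemptyOn : ∀ C : Clause F ar, C ≠ 0 → (sel C).Nonempty
  standard : ∀ C : Clause F ar,
    (∃ L ∈ sel C, L.pos = false) ∨ ∀ L ∈ sel C, ∀ M ∈ C, ¬ litGT O M L

/-- The inference rules of the PaRC calculus on partial clauses.
`Inf O sel prems σ concl` means: there is a PaRC inference with premises `prems`,
most general unifier `σ`, and conclusion `concl`; selected literals are the displayed
first literals of the premises. -/
inductive Inf (O : SimpOrd F ar) (sel : SelFun F ar O) :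
    List (PClause F ar) → Subst F ar → Clause F ar → Prop
  | sup {l r : Trm F ar} {C₁ : Clause F ar} {R₁ : RForm F ar}
      {h₁ : RForm.fvars R₁ ⊆ Clause.fvars (Lit.mk true l r ::ₘ C₁)}
      {b : Bool} {s t : Trm F ar} {C₂ : Clause F ar} {R₂ : RForm F ar}
      {h₂ : RForm.fvars R₂ ⊆ Clause.fvars (Lit.mk b s t ::ₘ C₂)}
      {p : List ℕ} {l' : Trm F ar} {σ : Subst F ar} :
      Trm.atPos s p = some l' →
      (∀ x, l' ≠ .var x) →
      IsMGU σ l l' →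
      Lit.mk true l r ∈ sel.sel (Lit.mk true l r ::ₘ C₁) →
      Lit.mk b s t ∈ sel.sel (Lit.mk b s t ::ₘ C₂) →
      ¬ RSat O σ (RForm.ge r l) →
      ¬ RSat O σ (RForm.ge t s) →
      ¬ RSat O σ (Clause.geForm C₁ l) →
      (b = true → ¬ RSat O σ (Clause.geForm C₂ s)) →
      ¬ RSat O σ R₁ →
      ¬ RSat O σ R₂ →
      Inf O sel [⟨Lit.mk true l r ::ₘ C₁, R₁, h₁⟩, ⟨Lit.mk b s t ::ₘ C₂, R₂, h₂⟩] σ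
        (Clause.subst σ (Lit.mk b (Trm.replace s p r) t ::ₘ (C₁ + C₂)))
  | eqres {s t : Trm F ar} {C : Clause F ar} {R : RForm F ar}
      {h : RForm.fvars R ⊆ Clause.fvars (Lit.mk false s t ::ₘ C)} {σ : Subst F ar} :
      IsMGU σ s t →
      Lit.mk false s t ∈ sel.sel (Lit.mk false s t ::ₘ C) →
      ¬ RSat O σ R →
      Inf O sel [⟨Lit.mk false s t ::ₘ C, R, h⟩] σ (Clause.subst σ C)
  | eqfac {s t s' t' : Trm F ar} {C : Clause F ar} {R : RForm F ar}
      {h : RForm.fvars R ⊆ Clause.fvars (Lit.mk true s t ::ₘ Lit.mk true s' t' ::ₘ C)}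
      {σ : Subst F ar} :
      IsMGU σ s s' →
      Lit.mk true s t ∈ sel.sel (Lit.mk true s t ::ₘ Lit.mk true s' t' ::ₘ C) →
      Lit.mk true s' t' ∈ sel.sel (Lit.mk true s t ::ₘ Lit.mk true s' t' ::ₘ C) →
      ¬ RSat O σ (RForm.ge t s) →
      ¬ RSat O σ (RForm.gt t' t) →
      ¬ RSat O σ (Clause.gtForm C s) →
      ¬ RSat O σ R →
      Inf O sel [⟨Lit.mk true s t ::ₘ Lit.mk true s' t' ::ₘ C, R, h⟩] σ
        (Clause.subst σ (Lit.mk true s t ::ₘ Lit.mk false t t' ::ₘ C))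

/-! ### Saturation -/

/-- A saturation w.r.t. the PaRC calculus: `S 0` consists of partial clauses of the
form `C ⋈ ⊥`, and each step is either an inference step or a redundancy step. -/
structure Saturation (O : SimpOrd F ar) (sel : SelFun F ar O) : Type where
  S : ℕ → Set (PClause F ar)
  init : ∀ pc ∈ S 0, pc.rf = RForm.falsum
  step : ∀ i : ℕ,
    (∃ (prems : List (PClause F ar)) (σ : Subst F ar) (concl : Clause F ar),
        (∀ pc ∈ prems, pc ∈ S i) ∧ Inf O sel prems σ concl ∧
        S (i + 1) = S i ∪ {⟨concl, RForm.falsum, RForm.falsum_fvars_sub _⟩}) ∨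
    (∃ pc ∈ S i, ∃ (R₂ : RForm F ar)
        (h : RForm.fvars (RForm.or pc.rf R₂) ⊆ Clause.fvars pc.cl),
        (∀ θ : Subst F ar, GroundingFor θ pc.cl → RSat O θ R₂ →
          Redundant O (gstar (S i)) (Clause.subst θ pc.cl)) ∧
        S (i + 1) = (S i \ {pc}) ∪ {⟨pc.cl, RForm.or pc.rf R₂, h⟩})

variable {O : SimpOrd F ar} {sel : SelFun F ar O}

/-- `S_ω = ⋃ i, S i`. -/
def Saturation.Somega (𝕊 : Saturation O sel) : Set (PClause F ar) := ⋃ i, 𝕊.S i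

/-- The limit `⋃_{i≥0} ⋂_{j≥i} ⌊S_j⌋` of a saturation. -/
def Saturation.limit (𝕊 : Saturation O sel) : Set (Clause F ar) :=
  ⋃ i : ℕ, ⋂ j : ℕ, ⋂ (_ : j ≥ i), gndS O (𝕊.S j)

/-- A ground clause is persistent if it belongs to the limit. -/
def Saturation.Persistent (𝕊 : Saturation O sel) (C : Clause F ar) : Prop := C ∈ 𝕊.limit

/-- Fairness of a saturation. -/
def Saturation.Fair (𝕊 : Saturation O sel) : Prop :=
  ∀ (prems : List (PClause F ar)) (σ : Subst F ar) (concl : Clause F ar) (ρ : Subst F ar),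
    Inf O sel prems σ concl →
    (∀ pc ∈ prems, 𝕊.Persistent (Clause.subst ρ (Clause.subst σ pc.cl))) →
    ∃ i : ℕ, (⟨concl, RForm.falsum, RForm.falsum_fvars_sub _⟩ : PClause F ar) ∈ 𝕊.S i

/-! ### Ground rewrite systems and the model construction -/

/-- One-step ground rewriting with a set of (ground) rewrite rules. -/
def Rw (I : Set (Trm F ar × Trm F ar)) (s t : Trm F ar) : Prop :=
  ∃ lr ∈ I, ∃ p : List ℕ, Trm.atPos s p = some lr.1 ∧ t = Trm.replace s p lr.2

def RwStar (I : Set (Trm F ar × Trm F ar)) : Trm F ar → Trm F ar → Prop :=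
  Relation.ReflTransGen (Rw I)

/-- A term is irreducible (a normal form) in `I`. -/
def NormalForm (I : Set (Trm F ar × Trm F ar)) (t : Trm F ar) : Prop := ∀ u, ¬ Rw I t u

/-- `s` and `t` have the same normal form in `I`. -/
def SameNF (I : Set (Trm F ar × Trm F ar)) (s t : Trm F ar) : Prop :=
  ∃ u : Trm F ar, RwStar I s u ∧ RwStar I t u ∧ NormalForm I u

/-- Truth of a ground clause in the interpretation given by a rewrite system. -/
def TrueIn (I : Set (Trm F ar × Trm F ar)) (C : Clause F ar) : Prop :=
  ∃ L ∈ C, if L.pos then SameNF I L.lhs L.rhs else ¬ SameNF I L.lhs L.rhs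

def NonOverlapping (I : Set (Trm F ar × Trm F ar)) : Prop :=
  ∀ lr ∈ I, ∀ lr' ∈ I, lr ≠ lr' → ∀ p : List ℕ, Trm.atPos (Prod.fst lr) p ≠ some (Prod.fst lr')

def Terminating (I : Set (Trm F ar × Trm F ar)) : Prop :=
  WellFounded (fun s t : Trm F ar => Rw I t s)

def Confluent (I : Set (Trm F ar × Trm F ar)) : Prop :=
  ∀ a b c : Trm F ar, RwStar I a b → RwStar I a c → ∃ d, RwStar I b d ∧ RwStar I c d

/-- The productivity condition of the model construction: there is a partial clause
`(l₁ ≈ r₁ ∨ C ⋈ R) ∈ S_ω` (with `l₁ ≈ r₁` selected) and a grounding substitution `θ`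
with `l₁θ = l`, `l₁θ ≻ r₁θ`, `l₁θ ≻ Cθ`, `θ ⊭ R`, `I_{≺l} ⊭ Cθ`, producing the rule
`l → rr` where `rr = r₁θ`. -/
def ProducesWith (O : SimpOrd F ar) (sel : SelFun F ar O) (Sω : Set (PClause F ar))
    (Ipre : Set (Trm F ar × Trm F ar)) (l rr : Trm F ar) : Prop :=
  ∃ (l₁ r₁ : Trm F ar) (C : Clause F ar) (R : RForm F ar)
    (h : RForm.fvars R ⊆ Clause.fvars (Lit.mk true l₁ r₁ ::ₘ C)) (θ : Subst F ar),
    (⟨Lit.mk true l₁ r₁ ::ₘ C, R, h⟩ : PClause F ar) ∈ Sω ∧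
    Lit.mk true l₁ r₁ ∈ sel.sel (Lit.mk true l₁ r₁ ::ₘ C) ∧
    GroundingFor θ (Lit.mk true l₁ r₁ ::ₘ C) ∧
    Trm.subst θ l₁ = l ∧
    O.gt (Trm.subst θ l₁) (Trm.subst θ r₁) ∧
    (∀ L ∈ Clause.subst θ C, O.gt (Trm.subst θ l₁) L.lhs ∧ O.gt (Trm.subst θ l₁) L.rhs) ∧
    ¬ RSat O θ R ∧
    ¬ TrueIn Ipre (Clause.subst θ C) ∧
    rr = Trm.subst θ r₁

/-- The rewrite system `I_l` of the model construction, defined by well-founded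
recursion on `≻`. -/
noncomputable def Interp (O : SimpOrd F ar) (sel : SelFun F ar O)
    (Sω : Set (PClause F ar)) : Trm F ar → Set (Trm F ar × Trm F ar) :=
  WellFounded.fix (C := fun _ => Set (Trm F ar × Trm F ar)) O.wf
    (fun l Irec =>
      let Ipre : Set (Trm F ar × Trm F ar) := ⋃ (r : Trm F ar), ⋃ (h : O.gt l r), Irec r h
      letI := Classical.propDecidable
      if h : NormalForm Ipre l ∧ ∃ rr, ProducesWith O sel Sω Ipre l rr then
        Ipre ∪ {(l, h.2.choose)}
      else Ipre)

/-- The rewrite system `I_{≺l}` of the model construction. -/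
noncomputable def IPre (O : SimpOrd F ar) (sel : SelFun F ar O)
    (Sω : Set (PClause F ar)) (l : Trm F ar) : Set (Trm F ar × Trm F ar) :=
  ⋃ (r : Trm F ar), ⋃ (_ : O.gt l r), Interp O sel Sω r

/-- The rewrite system `I_ω = ⋃_l I_l` of the model construction. -/
noncomputable def IOmega (O : SimpOrd F ar) (sel : SelFun F ar O)
    (Sω : Set (PClause F ar)) : Set (Trm F ar × Trm F ar) :=
  ⋃ (l : Trm F ar), Interp O sel Sω l

/-!
No step removes a clause from `S*`: an inference step adds one, and a redundancy step only
strengthens the redundancy formula of a partial clause. Hence `S_i* ⊆ S_j*` for `i ≤ j`, and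
redundancy w.r.t. `S_i*` persists. Along the saturation one shows that every ground instance
`Cθ` of some `C ⋈ R ∈ S_j` with `θ ⊨ R` is redundant w.r.t. `S_j*`; every clause of `S_j*`
missing from `⌊S_j⌋` is such an instance. Since the clause ordering is well founded,
each of them can be replaced, in a redundancy certificate, by smaller clauses entailing it until
only clauses of `⌊S_j⌋` remain.
-/

section MultGT

open Function

variable {α : Type} {r : α → α → Prop} [IsStrictOrder α r] {M N P : Multiset α}

theorem multGT_iff_isDershowitzMannaLT :
    MultGT r N M ↔ letI := partialOrderOfSO (swap r); M.IsDershowitzMannaLT N := by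
  constructor
  · rintro ⟨X, Y, Z, hX, rfl, rfl, hYX⟩
    exact ⟨Z, Y, X, hX, rfl, rfl, hYX⟩
  · rintro ⟨Z, Y, X, hX, rfl, rfl, hYX⟩
    exact ⟨X, Y, Z, hX, rfl, rfl, hYX⟩

theorem MultGT.trans (h₁ : MultGT r N M) (h₂ : MultGT r M P) : MultGT r N P :=
  letI := partialOrderOfSO (swap r)
  multGT_iff_isDershowitzMannaLT.2 <|
    (multGT_iff_isDershowitzMannaLT.1 h₂).trans (multGT_iff_isDershowitzMannaLT.1 h₁)

theorem wellFounded_swap_multGT (h : WellFounded (swap r)) :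
    WellFounded (swap (MultGT (α := α) r)) := by
  let := partialOrderOfSO (swap r)
  have : WellFoundedLT α := ⟨h⟩
  exact Subrelation.wf multGT_iff_isDershowitzMannaLT.1 Multiset.wellFounded_isDershowitzMannaLT

end MultGT

instance SimpOrd.isStrictOrder (O : SimpOrd F ar) : IsStrictOrder (Trm F ar) O.gt where
  irrefl := O.irrefl
  trans _ _ _ := O.trans

theorem wellFounded_swap_litGT (O : SimpOrd F ar) : WellFounded (Function.swap (litGT O)) :=
  InvImage.wf Lit.ms (wellFounded_swap_multGT O.wf)

instance litGT.isStrictOrder (O : SimpOrd F ar) : IsStrictOrder (Lit F ar) (litGT O) where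
  irrefl L h := (wellFounded_swap_litGT O).irrefl.irrefl L h
  trans _ _ _ := MultGT.trans

theorem wellFounded_swap_clauseGT (O : SimpOrd F ar) :
    WellFounded (Function.swap (clauseGT O)) :=
  wellFounded_swap_multGT (wellFounded_swap_litGT O)

theorem clauseGT_trans {C D E : Clause F ar} (h₁ : clauseGT O C D) (h₂ : clauseGT O D E) :
    clauseGT O C E :=
  MultGT.trans h₁ h₂


theorem Trm.IsGround.notMem_fvars {t : Trm F ar} (h : t.IsGround) (x : ℕ) : x ∉ t.fvars := by
  induction t with
  | var y => exact h.elim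
  | app f a ih =>
    simp only [Trm.fvars, Set.mem_iUnion, not_exists]
    exact fun i => ih i (h i)

theorem Trm.isGround_subst_iff {t : Trm F ar} {σ : Subst F ar} :
    (t.subst σ).IsGround ↔ ∀ x ∈ t.fvars, (σ x).IsGround := by
  induction t with
  | var x => simp [Trm.subst, Trm.fvars]
  | app f a ih =>
    simp only [Trm.subst, Trm.IsGround, Trm.fvars, Set.mem_iUnion, ih]
    exact ⟨fun h x ⟨i, hx⟩ => h i x hx, fun h i x hx => h x ⟨i, hx⟩⟩

theorem Trm.subst_congr {t : Trm F ar} {σ τ : Subst F ar}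
    (h : ∀ x ∈ t.fvars, σ x = τ x) : t.subst σ = t.subst τ := by
  induction t with
  | var x => exact h x rfl
  | app f a ih =>
    simp only [Trm.subst]
    congr 1
    funext i
    exact ih i fun x hx => h x (Set.mem_iUnion.2 ⟨i, hx⟩)

theorem Trm.fvars_subst_subset (t : Trm F ar) (σ : Subst F ar) :
    (t.subst σ).fvars ⊆ ⋃ x ∈ t.fvars, (σ x).fvars := by
  induction t with
  | var x => simp [Trm.subst, Trm.fvars]
  | app f a ih =>
    simp only [Trm.subst, Trm.fvars, Set.iUnion_subset_iff]
    exact fun i => (ih i).trans (Set.biUnion_mono (Set.subset_iUnion (fun j => (a j).fvars) i) fun _ _ => le_rfl)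

theorem RForm.realize_congr {R : RForm F ar} {v w : Subst F ar}
    (h : ∀ x ∈ R.fvars, v x = w x) : RForm.realize O v R ↔ RForm.realize O w R := by
  induction R generalizing v w with
  | falsum | verum => rfl
  | eq s t | gt s t =>
    simp only [RForm.realize, RForm.fvars, Set.mem_union] at h ⊢
    rw [Trm.subst_congr fun x hx => h x (.inl hx), Trm.subst_congr fun x hx => h x (.inr hx)]
  | and a b iha ihb | or a b iha ihb =>
    simp only [RForm.realize, RForm.fvars, Set.mem_union] at h ⊢
    rw [iha fun x hx => h x (.inl hx), ihb fun x hx => h x (.inr hx)]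
  | ex x a ih =>
    refine exists_congr fun g => and_congr_right fun _ => ih fun y hy => ?_
    rcases eq_or_ne y x with rfl | hne
    · simp
    · simp only [Function.update_of_ne hne]
      exact h y ⟨hy, hne⟩

theorem RForm.fvars_subst_subset (R : RForm F ar) (σ : Subst F ar) :
    (R.subst σ).fvars ⊆ ⋃ x ∈ R.fvars, (σ x).fvars := by
  induction R generalizing σ with
  | falsum | verum => simp [RForm.subst, RForm.fvars]
  | eq s t | gt s t =>
    simp only [RForm.subst, RForm.fvars, Set.biUnion_union]
    exact Set.union_subset_union (Trm.fvars_subst_subset s σ) (Trm.fvars_subst_subset t σ)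
  | and a b iha ihb | or a b iha ihb =>
    simp only [RForm.subst, RForm.fvars, Set.biUnion_union]
    exact Set.union_subset_union (iha σ) (ihb σ)
  | ex x a ih =>
    rintro z ⟨hz, hzx⟩
    obtain ⟨y, hy, hzy⟩ := Set.mem_iUnion₂.1 (ih _ hz)
    rcases eq_or_ne y x with rfl | hne
    · exact (hzx (by simpa [Trm.fvars] using hzy)).elim
    · simp only [if_neg hne] at hzy
      exact Set.mem_iUnion₂.2 ⟨y, ⟨hy, hne⟩, hzy⟩

theorem RForm.realize_subst_congr_of_isGround {R : RForm F ar} {σ : Subst F ar}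
    (hσ : ∀ x ∈ R.fvars, (σ x).IsGround) (v w : Subst F ar) :
    RForm.realize O v (R.subst σ) ↔ RForm.realize O w (R.subst σ) :=
  RForm.realize_congr fun x hx => by
    obtain ⟨y, hy, hxy⟩ := Set.mem_iUnion₂.1 (R.fvars_subst_subset σ hx)
    exact ((hσ y hy).notMem_fvars x hxy).elim

theorem exists_isGround (hconst : ∃ c : F, ar c = 0) : ∃ t : Trm F ar, t.IsGround := by
  obtain ⟨c, hc⟩ := hconst
  exact ⟨.app c fun i => (Fin.cast hc i).elim0, fun i => (Fin.cast hc i).elim0⟩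

theorem not_rSat_falsum (hconst : ∃ c : F, ar c = 0) (σ : Subst F ar) :
    ¬ RSat O σ .falsum := fun h => by
  obtain ⟨t, ht⟩ := exists_isGround hconst
  exact h (fun _ => t) fun _ => ht

theorem rSat_or_iff (hconst : ∃ c : F, ar c = 0) {σ : Subst F ar} {a b : RForm F ar}
    (hσ : ∀ x ∈ (RForm.or a b).fvars, (σ x).IsGround) :
    RSat O σ (.or a b) ↔ RSat O σ a ∨ RSat O σ b := by
  obtain ⟨t, ht⟩ := exists_isGround hconst
  refine ⟨fun h => ?_, fun h v hv => h.imp (· v hv) (· v hv)⟩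
  -- `σ` grounds both disjuncts, so their truth does not depend on the valuation.
  rcases h (fun _ => t) (fun _ => ht) with h | h
  · exact .inl fun v _ => (RForm.realize_subst_congr_of_isGround (fun x hx => hσ x (.inl hx)) _ v).1 h
  · exact .inr fun v _ => (RForm.realize_subst_congr_of_isGround (fun x hx => hσ x (.inr hx)) _ v).1 h

theorem GroundingFor.isGround_of_mem_fvars {θ : Subst F ar} {C : Clause F ar}
    (h : GroundingFor θ C) {x : ℕ} (hx : x ∈ C.fvars) : (θ x).IsGround := by
  obtain ⟨L, hL, hx⟩ := hx
  have hg := h (L.subst θ) (Multiset.mem_map_of_mem _ hL)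
  rcases hx with hx | hx
  · exact Trm.isGround_subst_iff.1 hg.1 x hx
  · exact Trm.isGround_subst_iff.1 hg.2 x hx

theorem Entails.mono {S T : Set (Clause F ar)} (hST : S ⊆ T) {D : Clause F ar}
    (h : Entails S D) : Entails T D :=
  fun A hA => h A fun C hC => hA C (hST hC)

theorem Entails.trans {S T : Set (Clause F ar)} {D : Clause F ar} (hD : Entails S D)
    (hS : ∀ C ∈ S, Entails T C) : Entails T D :=
  fun A hA => hD A fun C hC => hS C hC A hA

theorem Redundant.mono {S T : Set (Clause F ar)} (hST : S ⊆ T) {D : Clause F ar}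
    (h : Redundant O S D) : Redundant O T D := by
  obtain ⟨Cs, hCs, hent, hlt⟩ := h
  exact ⟨Cs, fun C hC => hST (hCs C hC), hent, hlt⟩

theorem Redundant.of_forall_mem_or_redundant {S T : Set (Clause F ar)} {D : Clause F ar}
    (hD : Redundant O S D) (h : ∀ C ∈ S, clauseGT O D C → C ∈ T ∨ Redundant O T C) :
    Redundant O T D := by
  obtain ⟨Cs, hCs, hent, hlt⟩ := hD
  have hcert : ∀ C ∈ Cs, ∃ Es : List (Clause F ar), (∀ E ∈ Es, E ∈ T) ∧
      Entails {E | E ∈ Es} C ∧ ∀ E ∈ Es, clauseGT O D E := by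
    intro C hC
    rcases h C (hCs C hC) (hlt C hC) with hCT | ⟨Es, hEsT, hEs, hEs_lt⟩
    · exact ⟨[C], by simpa using hCT, fun A hA => hA C (by simp), by simpa using hlt C hC⟩
    · exact ⟨Es, hEsT, hEs, fun E hE => clauseGT_trans (hlt C hC) (hEs_lt E hE)⟩
  choose Es hEsT hEs hEs_lt using hcert
  have hmem {E : Clause F ar} :
      E ∈ Cs.attach.flatMap (fun C => Es C.1 C.2) ↔ ∃ C hC, E ∈ Es C hC := by
    simp
  refine ⟨Cs.attach.flatMap fun C => Es C.1 C.2, fun E hE => ?_, hent.trans fun C hC => ?_,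
    fun E hE => ?_⟩
  · obtain ⟨C, hC, hE⟩ := hmem.1 hE
    exact hEsT C hC E hE
  · exact (hEs C hC).mono fun E hE => hmem.2 ⟨C, hC, hE⟩
  · obtain ⟨C, hC, hE⟩ := hmem.1 hE
    exact hEs_lt C hC E hE

theorem Redundant.of_forall_redundant {S T : Set (Clause F ar)}
    (hST : ∀ C ∈ S, C ∉ T → Redundant O S C) {D : Clause F ar} (hD : Redundant O S D) :
    Redundant O T D := by
  induction D using (wellFounded_swap_clauseGT O).induction with
  | _ D ih =>
    refine hD.of_forall_mem_or_redundant fun C hC hDC => ?_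
    by_cases hCT : C ∈ T
    · exact .inl hCT
    · exact .inr (ih C hDC (hST C hC hCT))

theorem gstar_subset_gstar {S T : Set (PClause F ar)}
    (h : ∀ pc ∈ S, ∃ pc' ∈ T, pc'.cl = pc.cl) : gstar S ⊆ gstar T := by
  rintro D ⟨pc, hpc, θ, rfl, hD⟩
  obtain ⟨pc', hpc', hcl⟩ := h pc hpc
  exact ⟨pc', hpc', θ, by rw [hcl], hD⟩

namespace Saturation

variable (𝕊 : Saturation O sel)

theorem exists_mem_succ_cl_eq {j : ℕ} {pc : PClause F ar} (hpc : pc ∈ 𝕊.S j) :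
    ∃ pc' ∈ 𝕊.S (j + 1), pc'.cl = pc.cl := by
  rcases 𝕊.step j with ⟨_, _, _, -, -, hS⟩ | ⟨pc₀, -, R₂, h, -, hS⟩
  · exact ⟨pc, hS ▸ .inl hpc, rfl⟩
  · by_cases hpc₀ : pc = pc₀
    · subst hpc₀
      exact ⟨⟨pc.cl, .or pc.rf R₂, h⟩, hS ▸ .inr rfl, rfl⟩
    · exact ⟨pc, hS ▸ .inl ⟨hpc, hpc₀⟩, rfl⟩

theorem gstar_mono : Monotone fun j => gstar (𝕊.S j) :=
  monotone_nat_of_le_succ fun _ => gstar_subset_gstar fun _ => 𝕊.exists_mem_succ_cl_eq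

theorem redundant_of_rSat (hconst : ∃ c : F, ar c = 0) {j : ℕ} {pc : PClause F ar}
    (hpc : pc ∈ 𝕊.S j) {θ : Subst F ar} (hθ : GroundingFor θ pc.cl) (hR : RSat O θ pc.rf) :
    Redundant O (gstar (𝕊.S j)) (pc.cl.subst θ) := by
  induction j generalizing pc with
  | zero => exact absurd (𝕊.init pc hpc ▸ hR) (not_rSat_falsum hconst θ)
  | succ j ih =>
    refine Redundant.mono (𝕊.gstar_mono j.le_succ) ?_
    rcases 𝕊.step j with ⟨_, _, _, -, -, hS⟩ | ⟨pc₀, hpc₀, R₂, h, hR₂, hS⟩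
    · rcases hS ▸ hpc with hpc | rfl
      · exact ih hpc hθ hR
      · exact absurd hR (not_rSat_falsum hconst θ)
    · rcases hS ▸ hpc with ⟨hpc, -⟩ | rfl
      · exact ih hpc hθ hR
      · rcases (rSat_or_iff hconst fun x hx => hθ.isGround_of_mem_fvars (h hx)).1 hR with hR | hR
        · exact ih (pc := pc₀) hpc₀ hθ hR
        · exact hR₂ θ hθ hR

theorem redundant_gndS (hconst : ∃ c : F, ar c = 0) {j : ℕ} {D : Clause F ar}
    (hD : Redundant O (gstar (𝕊.S j)) D) : Redundant O (gndS O (𝕊.S j)) D := by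
  refine hD.of_forall_redundant ?_
  rintro C ⟨pc, hpc, θ, rfl, hθ⟩ hC
  refine 𝕊.redundant_of_rSat hconst hpc hθ ?_
  by_contra hR
  exact hC (Set.mem_biUnion hpc ⟨θ, rfl, hθ, hR⟩)

end Saturation

theorem redundancy_persists_general {F : Type} {ar : F → ℕ} (hconst : ∃ c : F, ar c = 0)
    (O : SimpOrd F ar) (sel : SelFun F ar O) (𝕊 : Saturation O sel)
    (C : Clause F ar) (i : ℕ)
    (hred : Redundant O (gstar (𝕊.S i)) C) :
    ∀ j ≥ i, Redundant O (gstar (𝕊.S j)) C ∧ Redundant O (gndS O (𝕊.S j)) C := by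
  intro j hij
  have hredj := hred.mono (𝕊.gstar_mono hij)
  exact ⟨hredj, 𝕊.redundant_gndS hconst hredj⟩

/-- Redundancy persists: if a ground clause is redundant w.r.t.
`S i *`, then for all `j ≥ i` it is redundant w.r.t. `S j *` and w.r.t. `⌊S j⌋`. -/
theorem redundancy_persists {F : Type} {ar : F → ℕ} (hF : Finite F) (hconst : ∃ c : F, ar c = 0)
    (O : SimpOrd F ar) (sel : SelFun F ar O) (𝕊 : Saturation O sel)
    (C : Clause F ar) (hC : Clause.IsGround C) (i : ℕ)
    (hred : Redundant O (gstar (𝕊.S i)) C) :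
    ∀ j ≥ i, Redundant O (gstar (𝕊.S j)) C ∧ Redundant O (gndS O (𝕊.S j)) C :=
  redundancy_persists_general hconst O sel 𝕊 C i hred

end PaRC
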